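/- arXiv:1701.03767 — 6 statements merged into one kernel-verified Lean document; each statement's English description precedes it below -/
import Mathlib

section
/- For u, v ∈ [0,1] and h_g : [0,1] → [0,1] a continuous strictly increasing bijection with h_g(0)=0, h_g(1)=1, the function φ(u,v) = ∫₀ᵘ h_g⁻¹(u')du' + ∫₀ᵛ h_f⁻¹(v')dv' − uv, minimized over v ∈ [0,1] for fixed u, equals A(u) = ∫₀ᵘ (h_g⁻¹(u') − h_f(u'))du', where h_f : [0,1] → [0,1] is also a continuous strictly increasing bijection with h_f(0)=0, h_f(1)=1. -/
/-!
Young's identity `∫₀^{f u} f⁻¹ + ∫₀^u f = u f(u)` is proved by showing that its defect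
`Ψ x = ∫_{f a}^{f x} f⁻¹ + ∫_a^x f - x f(x)` has derivative zero: on `[x, y]` both integrals are
squeezed between the lower and upper rectangles, so `|Ψ y - Ψ x| ≤ (y - x)(f y - f x)`, which is
`o(y - x)` by continuity of `f`. The minimisation in `v` is then the monotonicity of `f⁻¹`:
`∫_{f u}^v f⁻¹ ≥ u (v - f u)` because `f⁻¹ ≥ u` to the right of `f u` and `≤ u` to its left.
-/

open Set MeasureTheory intervalIntegral Filter Topology Asymptotics

theorem StrictMonoOn.monotoneOn_of_leftInvOn {α β : Type*} [LinearOrder α] [Preorder β]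
    {f : α → β} {g : β → α} {s : Set α} (hf : StrictMonoOn f s) (hg : LeftInvOn g f s) :
    MonotoneOn g (f '' s) := by
  rintro _ ⟨x, hx, rfl⟩ _ ⟨y, hy, rfl⟩ hxy
  rw [hg hx, hg hy]
  exact (hf.le_iff_le hx hy).mp hxy

namespace MonotoneOn

variable {g : ℝ → ℝ} {a b : ℝ}

theorem mul_sub_le_intervalIntegral (hg : MonotoneOn g (uIcc a b)) :
    g a * (b - a) ≤ ∫ t in a..b, g t := by
  rcases le_total a b with hab | hba
  · have h := integral_mono_on hab (intervalIntegrable_const (μ := volume)) hg.intervalIntegrable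
      fun t ht => hg left_mem_uIcc (Icc_subset_uIcc ht) ht.1
    simpa [mul_comm] using h
  · have h := integral_mono_on hba hg.intervalIntegrable.symm
      (intervalIntegrable_const (μ := volume))
      fun t ht => hg (Icc_subset_uIcc' ht) left_mem_uIcc ht.2
    rw [integral_symm]
    simp only [intervalIntegral.integral_const, smul_eq_mul] at h
    linarith

theorem intervalIntegral_le_mul_sub (hg : MonotoneOn g (uIcc a b)) :
    ∫ t in a..b, g t ≤ g b * (b - a) := by
  rcases le_total a b with hab | hba
  · have h := integral_mono_on hab hg.intervalIntegrable (intervalIntegrable_const (μ := volume))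
      fun t ht => hg (Icc_subset_uIcc ht) right_mem_uIcc ht.2
    simpa [mul_comm] using h
  · have h := integral_mono_on hba (intervalIntegrable_const (μ := volume))
      hg.intervalIntegrable.symm
      fun t ht => hg right_mem_uIcc (Icc_subset_uIcc' ht) ht.1
    rw [integral_symm]
    simp only [intervalIntegral.integral_const, smul_eq_mul] at h
    linarith

end MonotoneOn

theorem abs_integral_add_integral_sub_le_of_leftInv {f g : ℝ → ℝ} {x y : ℝ} (hxy : x ≤ y)
    (hf : MonotoneOn f (Icc x y)) (hg : MonotoneOn g (Icc (f x) (f y)))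
    (hgx : g (f x) = x) (hgy : g (f y) = y) :
    |(∫ t in f x..f y, g t) + (∫ s in x..y, f s) - (y * f y - x * f x)|
      ≤ (y - x) * (f y - f x) := by
  have hfxy : f x ≤ f y := hf (left_mem_Icc.2 hxy) (right_mem_Icc.2 hxy) hxy
  rw [← uIcc_of_le hxy] at hf
  rw [← uIcc_of_le hfxy] at hg
  have hg_lower := hg.mul_sub_le_intervalIntegral
  have hg_upper := hg.intervalIntegral_le_mul_sub
  have hf_lower := hf.mul_sub_le_intervalIntegral
  have hf_upper := hf.intervalIntegral_le_mul_sub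
  rw [hgx] at hg_lower
  rw [hgy] at hg_upper
  rw [abs_le]
  constructor <;> linarith

theorem hasDerivWithinAt_zero_of_abs_sub_le {Ψ f : ℝ → ℝ} {s : Set ℝ} {x : ℝ}
    (hf : ContinuousWithinAt f s x) (h : ∀ y ∈ s, |Ψ y - Ψ x| ≤ |y - x| * |f y - f x|) :
    HasDerivWithinAt Ψ 0 s x := by
  rw [hasDerivWithinAt_iff_isLittleO, isLittleO_iff]
  intro c hc
  have hfc : ∀ᶠ y in 𝓝[s] x, |f y - f x| ≤ c := by
    filter_upwards [Metric.tendsto_nhds.mp hf c hc] with y hy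
    exact hy.le
  filter_upwards [self_mem_nhdsWithin, hfc] with y hy hfy
  simp only [smul_zero, sub_zero, Real.norm_eq_abs]
  calc |Ψ y - Ψ x| ≤ |y - x| * |f y - f x| := h y hy
    _ ≤ |y - x| * c := by gcongr
    _ = c * |y - x| := mul_comm _ _

theorem Convex.eq_of_abs_sub_le_mul_abs_sub {Ψ f : ℝ → ℝ} {s : Set ℝ} (hs : Convex ℝ s)
    (hf : ContinuousOn f s) (h : ∀ x ∈ s, ∀ y ∈ s, |Ψ y - Ψ x| ≤ |y - x| * |f y - f x|)
    {x y : ℝ} (hx : x ∈ s) (hy : y ∈ s) : Ψ x = Ψ y := by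
  have hΨ : ∀ z ∈ s, HasDerivWithinAt Ψ 0 s z := fun z hz =>
    hasDerivWithinAt_zero_of_abs_sub_le (hf z hz) (h z hz)
  have := hs.norm_image_sub_le_of_norm_hasDerivWithin_le hΨ (fun _ _ => norm_zero.le) hx hy
  rw [zero_mul, norm_le_zero_iff, sub_eq_zero] at this
  exact this.symm

theorem StrictMonoOn.integral_leftInvOn_add_integral {f g : ℝ → ℝ} {a b : ℝ} (hab : a ≤ b)
    (hf_cont : ContinuousOn f (Icc a b)) (hf : StrictMonoOn f (Icc a b))
    (hg : LeftInvOn g f (Icc a b)) :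
    (∫ t in f a..f b, g t) + ∫ s in a..b, f s = b * f b - a * f a := by
  have hg_mono : MonotoneOn g (Icc (f a) (f b)) :=
    (hf.monotoneOn_of_leftInvOn hg).mono (intermediate_value_Icc hab hf_cont)
  have hf_maps : MapsTo f (Icc a b) (Icc (f a) (f b)) := hf.monotoneOn.mapsTo_Icc
  have ha : a ∈ Icc a b := left_mem_Icc.2 hab
  have hg_int : ∀ z ∈ Icc a b, IntervalIntegrable g volume (f a) (f z) := fun z hz =>
    (hg_mono.mono (uIcc_subset_Icc (hf_maps ha) (hf_maps hz))).intervalIntegrable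
  have hf_int : ∀ z ∈ Icc a b, IntervalIntegrable f volume a z := fun z hz =>
    (hf_cont.mono (uIcc_subset_Icc ha hz)).intervalIntegrable
  set Ψ : ℝ → ℝ := fun x => (∫ t in f a..f x, g t) + (∫ s in a..x, f s) - x * f x
  have hΨ_sub : ∀ x ∈ Icc a b, ∀ y ∈ Icc a b, Ψ y - Ψ x =
      (∫ t in f x..f y, g t) + (∫ s in x..y, f s) - (y * f y - x * f x) := by
    intro x hx y hy
    rw [← integral_interval_sub_left (hg_int y hy) (hg_int x hx),
      ← integral_interval_sub_left (hf_int y hy) (hf_int x hx)]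
    ring
  have hΨ_abs : ∀ x ∈ Icc a b, ∀ y ∈ Icc a b, |Ψ y - Ψ x| ≤ |y - x| * |f y - f x| := by
    intro x hx y hy
    wlog hxy : x ≤ y generalizing x y
    · rw [abs_sub_comm, abs_sub_comm y, abs_sub_comm (f y)]
      exact this y hy x hx (le_of_not_ge hxy)
    rw [abs_of_nonneg (sub_nonneg.2 hxy), abs_of_nonneg (sub_nonneg.2 (hf.monotoneOn hx hy hxy)),
      hΨ_sub x hx y hy]
    exact abs_integral_add_integral_sub_le_of_leftInv hxy
      (hf.monotoneOn.mono (Icc_subset_Icc hx.1 hy.2))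
      (hg_mono.mono (Icc_subset_Icc (hf_maps hx).1 (hf_maps hy).2)) (hg hx) (hg hy)
  have hΨ_eq := (convex_Icc a b).eq_of_abs_sub_le_mul_abs_sub hf_cont hΨ_abs ha
    (right_mem_Icc.2 hab)
  simp only [Ψ, integral_same] at hΨ_eq
  linarith

theorem stmt0_general
    (hf hg hfinv hginv : ℝ → ℝ)
    (hf_cont : ContinuousOn hf (Icc 0 1))
    (hf_mono : StrictMonoOn hf (Icc 0 1)) (hg_mono : StrictMonoOn hg (Icc 0 1))
    (hf_maps : MapsTo hf (Icc 0 1) (Icc 0 1))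
    (hf_surj : SurjOn hf (Icc 0 1) (Icc 0 1)) (hg_surj : SurjOn hg (Icc 0 1) (Icc 0 1))
    (hf0 : hf 0 = 0)
    (hfinv_left : ∀ v ∈ Icc (0:ℝ) 1, hfinv (hf v) = v)
    (hginv_left : ∀ u ∈ Icc (0:ℝ) 1, hginv (hg u) = u) :
    ∀ u ∈ Icc (0:ℝ) 1,
      IsLeast
        ((fun v => (∫ s in (0:ℝ)..u, hginv s) + (∫ t in (0:ℝ)..v, hfinv t) - u * v) ''
          Icc (0:ℝ) 1)
        (∫ s in (0:ℝ)..u, (hginv s - hf s)) ∧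
      (∫ s in (0:ℝ)..u, hginv s) + (∫ t in (0:ℝ)..(hf u), hfinv t) - u * hf u
        = ∫ s in (0:ℝ)..u, (hginv s - hf s) := by
  intro u hu
  have h0 : (0:ℝ) ∈ Icc (0:ℝ) 1 := left_mem_Icc.2 zero_le_one
  have hfinv_mono : MonotoneOn hfinv (Icc 0 1) :=
    (hf_mono.monotoneOn_of_leftInvOn hfinv_left).mono hf_surj
  have hginv_mono : MonotoneOn hginv (Icc 0 1) :=
    (hg_mono.monotoneOn_of_leftInvOn hginv_left).mono hg_surj
  have hfu := hf_maps hu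
  have hsub : Icc 0 u ⊆ Icc 0 1 := Icc_subset_Icc_right hu.2
  have hyoung := (hf_mono.mono hsub).integral_leftInvOn_add_integral hu.1 (hf_cont.mono hsub)
    (LeftInvOn.mono hfinv_left hsub)
  rw [hf0, zero_mul, sub_zero] at hyoung
  have hA : (∫ s in (0:ℝ)..u, hginv s) + (∫ t in (0:ℝ)..(hf u), hfinv t) - u * hf u
      = ∫ s in (0:ℝ)..u, (hginv s - hf s) := by
    rw [integral_sub (hginv_mono.mono (uIcc_subset_Icc h0 hu)).intervalIntegrable
      (hf_mono.monotoneOn.mono (uIcc_subset_Icc h0 hu)).intervalIntegrable]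
    linarith
  refine ⟨⟨⟨hf u, hfu, hA⟩, ?_⟩, hA⟩
  rintro _ ⟨v, hv, rfl⟩
  have hfinv_int : ∀ w ∈ Icc (0:ℝ) 1, IntervalIntegrable hfinv volume 0 w := fun w hw =>
    (hfinv_mono.mono (uIcc_subset_Icc h0 hw)).intervalIntegrable
  have hmin := (hfinv_mono.mono (uIcc_subset_Icc hfu hv)).mul_sub_le_intervalIntegral
  rw [hfinv_left u hu, ← integral_interval_sub_left (hfinv_int v hv) (hfinv_int _ hfu)] at hmin
  dsimp only
  linarith

/-- The minimum over `v ∈ [0,1]` of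
`φ(u,v) = ∫₀ᵘ h_g⁻¹ + ∫₀ᵛ h_f⁻¹ − uv` equals
`A(u) = ∫₀ᵘ (h_g⁻¹(s) − h_f(s)) ds`, attained at `v = h_f(u)`. -/
theorem stmt0
    (hf hg hfinv hginv : ℝ → ℝ)
    (hf_cont : ContinuousOn hf (Icc 0 1)) (hg_cont : ContinuousOn hg (Icc 0 1))
    (hf_mono : StrictMonoOn hf (Icc 0 1)) (hg_mono : StrictMonoOn hg (Icc 0 1))
    (hf_maps : MapsTo hf (Icc 0 1) (Icc 0 1)) (hg_maps : MapsTo hg (Icc 0 1) (Icc 0 1))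
    (hf_surj : SurjOn hf (Icc 0 1) (Icc 0 1)) (hg_surj : SurjOn hg (Icc 0 1) (Icc 0 1))
    (hf0 : hf 0 = 0) (hf1 : hf 1 = 1) (hg0 : hg 0 = 0) (hg1 : hg 1 = 1)
    (hfinv_left : ∀ v ∈ Icc (0:ℝ) 1, hfinv (hf v) = v)
    (hfinv_right : ∀ v ∈ Icc (0:ℝ) 1, hf (hfinv v) = v)
    (hginv_left : ∀ u ∈ Icc (0:ℝ) 1, hginv (hg u) = u)
    (hginv_right : ∀ u ∈ Icc (0:ℝ) 1, hg (hginv u) = u) :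
    ∀ u ∈ Icc (0:ℝ) 1,
      IsLeast
        ((fun v => (∫ s in (0:ℝ)..u, hginv s) + (∫ t in (0:ℝ)..v, hfinv t) - u * v) ''
          Icc (0:ℝ) 1)
        (∫ s in (0:ℝ)..u, (hginv s - hf s)) ∧
      (∫ s in (0:ℝ)..u, hginv s) + (∫ t in (0:ℝ)..(hf u), hfinv t) - u * hf u
        = ∫ s in (0:ℝ)..u, (hginv s - hf s) :=
  stmt0_general hf hg hfinv hginv hf_cont hf_mono hg_mono hf_maps hf_surj hg_surj hf0 hfinv_left
    hginv_left
end

section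
/- With f₀, f₁ continuous strictly increasing cdf's, T = f₁⁻¹∘f₀, T_λ(x)=(1−λ)x+λT(x), and f_λ the cdf of the pushforward of df₀ by T_λ: for any bounded measurable h : [0,1] → ℝ and λ ∈ [0,1], ∫₀¹ h(u) (f₀⁻¹(u) − f_λ⁻¹(u)) du = λ ∫_ℝ (x − T(x)) h(f₀(x)) df₀(x). In particular the map λ ↦ ∫₀¹ h(u) f_λ⁻¹(u) du is affine in λ. -/
open Set MeasureTheory intervalIntegral

/-!
A strictly increasing cdf `f₀` with range `(0,1)` pushes `μ₀` forward to Lebesgue measure on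
`(0,1)`, so the substitution `u = f₀ x` (with `f₀⁻¹ (f₀ x) = x`) turns
`∫₀¹ (f₀⁻¹ u - f₁⁻¹ u) h u du` into `∫ (x - T x) h (f₀ x) dμ₀`. Since
`f₀⁻¹ - f_λ⁻¹ = λ (f₀⁻¹ - f₁⁻¹)`, this gives the identity; affinity in `λ` is linearity of the
integral, `h` being bounded and both quantile functions integrable.
-/

theorem map_eq_volume_restrict_Ioo_of_cdf {μ : Measure ℝ} [IsProbabilityMeasure μ] {F : ℝ → ℝ}
    (hF : StrictMono F) (hrange : range F = Ioo 0 1) (hcdf : ∀ x, (μ (Iic x)).toReal = F x) :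
    μ.map F = volume.restrict (Ioo 0 1) := by
  have hF_meas : Measurable F := hF.monotone.measurable
  have : IsProbabilityMeasure (μ.map F) := Measure.isProbabilityMeasure_map hF_meas.aemeasurable
  have : IsProbabilityMeasure (volume.restrict (Ioo (0:ℝ) 1)) := ⟨by simp⟩
  have hF_mem : ∀ x, F x ∈ Ioo 0 1 := fun x => hrange ▸ mem_range_self x
  refine Measure.ext_of_Iic _ _ fun t => ?_
  rw [Measure.map_apply hF_meas measurableSet_Iic, Measure.restrict_apply measurableSet_Iic]
  rcases le_or_gt 1 t with ht1 | ht1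
  · have hpre : F ⁻¹' Iic t = univ := eq_univ_of_forall fun x => (hF_mem x).2.le.trans ht1
    rw [hpre, inter_eq_right.2 fun u hu => hu.2.le.trans ht1]
    simp
  have hIoc : Iic t ∩ Ioo 0 1 = Ioc 0 t := by
    ext u
    simp only [mem_inter_iff, mem_Iic, mem_Ioo, mem_Ioc]
    exact ⟨fun ⟨hut, hu0, _⟩ => ⟨hu0, hut⟩, fun ⟨hu0, hut⟩ => ⟨hut, hu0, hut.trans_lt ht1⟩⟩
  rw [hIoc, Real.volume_Ioc, sub_zero]
  rcases le_or_gt t 0 with ht0 | ht0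
  · have hpre : F ⁻¹' Iic t = ∅ :=
      eq_empty_of_forall_notMem fun x hx => (ht0.trans_lt (hF_mem x).1).not_ge hx
    rw [hpre, measure_empty, ENNReal.ofReal_of_nonpos ht0]
  · obtain ⟨x, rfl⟩ : t ∈ range F := hrange ▸ ⟨ht0, ht1⟩
    have hpre : F ⁻¹' Iic (F x) = Iic x := ext fun y => hF.le_iff_le
    rw [hpre, ← hcdf, ENNReal.ofReal_toReal (measure_ne_top μ _)]

theorem integral_comp_eq_setIntegral_Ioo_of_cdf {E : Type*} [NormedAddCommGroup E]
    [NormedSpace ℝ E] {μ : Measure ℝ} [IsProbabilityMeasure μ] {F : ℝ → ℝ}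
    (hF : StrictMono F) (hrange : range F = Ioo 0 1) (hcdf : ∀ x, (μ (Iic x)).toReal = F x)
    (g : ℝ → E) : ∫ x, g (F x) ∂μ = ∫ u in Ioo 0 1, g u := by
  rw [← map_eq_volume_restrict_Ioo_of_cdf hF hrange hcdf,
    (hF.monotone.measurable.measurableEmbedding hF.injective).integral_map]

theorem MeasureTheory.IntegrableOn.intervalIntegrable_bdd_mul {h f : ℝ → ℝ} {a b M : ℝ}
    (hab : a ≤ b) (hf : IntegrableOn f (Ioo a b))
    (hh : AEStronglyMeasurable h (volume.restrict (Ioo a b)))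
    (hM : ∀ u, |h u| ≤ M) : IntervalIntegrable (fun u => h u * f u) volume a b :=
  (intervalIntegrable_iff_integrableOn_Ioo_of_le hab).2 <| hf.bdd_mul hh (ae_of_all _ hM)

theorem intervalIntegral_mul_convexComb {h φ ψ : ℝ → ℝ} {a b : ℝ}
    (hφ : IntervalIntegrable (fun u => h u * φ u) volume a b)
    (hψ : IntervalIntegrable (fun u => h u * ψ u) volume a b) (t : ℝ) :
    ∫ u in a..b, h u * ((1 - t) * φ u + t * ψ u) =
      (1 - t) * (∫ u in a..b, h u * φ u) + t * ∫ u in a..b, h u * ψ u := by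
  rw [← intervalIntegral.integral_const_mul, ← intervalIntegral.integral_const_mul,
    ← intervalIntegral.integral_add (hφ.const_mul _) (hψ.const_mul _)]
  congr 1 with u
  ring

theorem stmt9_general (f₀ f₀inv f₁inv : ℝ → ℝ) (μ₀ : Measure ℝ) [IsProbabilityMeasure μ₀]
    (hf₀_mono : StrictMono f₀)
    (hf₀_range : Set.range f₀ = Ioo (0:ℝ) 1)
    (hinv₀_left : ∀ x, f₀inv (f₀ x) = x)
    (hcdf : ∀ x, (μ₀ (Iic x)).toReal = f₀ x)
    (hmom₀ : IntegrableOn f₀inv (Ioo (0:ℝ) 1)) (hmom₁ : IntegrableOn f₁inv (Ioo (0:ℝ) 1))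
    (h : ℝ → ℝ) (hmeas : Measurable h) (M : ℝ) (hM : ∀ u, |h u| ≤ M)
    (lam : ℝ) :
    (∫ u in (0:ℝ)..1, h u * (f₀inv u - ((1 - lam) * f₀inv u + lam * f₁inv u))) =
      lam * ∫ x, (x - f₁inv (f₀ x)) * h (f₀ x) ∂μ₀ ∧
    ∃ a b : ℝ, ∀ t ∈ Icc (0:ℝ) 1,
      (∫ u in (0:ℝ)..1, h u * ((1 - t) * f₀inv u + t * f₁inv u)) = a + b * t := by
  constructor
  · calc ∫ u in (0:ℝ)..1, h u * (f₀inv u - ((1 - lam) * f₀inv u + lam * f₁inv u))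
        = lam * ∫ u in Ioo 0 1, (f₀inv u - f₁inv u) * h u := by
          rw [integral_of_le zero_le_one, integral_Ioc_eq_integral_Ioo,
            ← MeasureTheory.integral_const_mul]
          congr 1 with u
          ring
      _ = lam * ∫ x, (x - f₁inv (f₀ x)) * h (f₀ x) ∂μ₀ := by
          rw [← integral_comp_eq_setIntegral_Ioo_of_cdf hf₀_mono hf₀_range hcdf]
          simp only [hinv₀_left]
  · have hφ := hmom₀.intervalIntegrable_bdd_mul zero_le_one hmeas.aestronglyMeasurable hM
    have hψ := hmom₁.intervalIntegrable_bdd_mul zero_le_one hmeas.aestronglyMeasurable hM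
    refine ⟨∫ u in (0:ℝ)..1, h u * f₀inv u,
      (∫ u in (0:ℝ)..1, h u * f₁inv u) - ∫ u in (0:ℝ)..1, h u * f₀inv u, fun t _ => ?_⟩
    rw [intervalIntegral_mul_convexComb hφ hψ]
    ring

/-- For the displacement interpolation with
`f_λ⁻¹(u) = (1−λ)f₀⁻¹(u) + λf₁⁻¹(u)` and any bounded measurable `h`,
`∫₀¹ h(u)(f₀⁻¹(u) − f_λ⁻¹(u)) du = λ ∫_ℝ (x − T(x)) h(f₀(x)) dμ₀(x)`;
in particular `λ ↦ ∫₀¹ h(u) f_λ⁻¹(u) du` is affine in `λ`. -/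
theorem stmt9 (f₀ f₁ f₀inv f₁inv : ℝ → ℝ) (μ₀ : Measure ℝ) [IsProbabilityMeasure μ₀]
    (hf₀_cont : Continuous f₀) (hf₁_cont : Continuous f₁)
    (hf₀_mono : StrictMono f₀) (hf₁_mono : StrictMono f₁)
    (hf₀_range : Set.range f₀ = Ioo (0:ℝ) 1) (hf₁_range : Set.range f₁ = Ioo (0:ℝ) 1)
    (hinv₀_left : ∀ x, f₀inv (f₀ x) = x) (hinv₀_right : ∀ u ∈ Ioo (0:ℝ) 1, f₀ (f₀inv u) = u)
    (hinv₁_left : ∀ x, f₁inv (f₁ x) = x) (hinv₁_right : ∀ u ∈ Ioo (0:ℝ) 1, f₁ (f₁inv u) = u)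
    (hcdf : ∀ x, (μ₀ (Iic x)).toReal = f₀ x)
    (hmom₀ : IntegrableOn f₀inv (Ioo (0:ℝ) 1)) (hmom₁ : IntegrableOn f₁inv (Ioo (0:ℝ) 1))
    (h : ℝ → ℝ) (hmeas : Measurable h) (M : ℝ) (hM : ∀ u, |h u| ≤ M)
    (hT_int : Integrable (fun x => x - f₁inv (f₀ x)) μ₀)
    (lam : ℝ) (hlam : lam ∈ Icc (0:ℝ) 1) :
    (∫ u in (0:ℝ)..1, h u * (f₀inv u - ((1 - lam) * f₀inv u + lam * f₁inv u))) =
      lam * ∫ x, (x - f₁inv (f₀ x)) * h (f₀ x) ∂μ₀ ∧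
    ∃ a b : ℝ, ∀ t ∈ Icc (0:ℝ) 1,
      (∫ u in (0:ℝ)..1, h u * ((1 - t) * f₀inv u + t * f₁inv u)) = a + b * t :=
  stmt9_general f₀ f₀inv f₁inv μ₀ hf₀_mono hf₀_range hinv₀_left hcdf hmom₀ hmom₁ h hmeas M hM lam
end

section
/- (Displacement convexity of the interaction term) Let μ₀, μ₁, ν₀, ν₁ be probability measures on ℝ with continuous strictly increasing cdf's f₀, f₁, g₀, g₁. Let T_f = f₁⁻¹∘f₀ and T_g = g₁⁻¹∘g₀, and for λ ∈ [0,1] let μ_λ, ν_λ be the pushforwards of μ₀, ν₀ by x ↦ (1−λ)x + λT_f(x) and x ↦ (1−λ)x + λT_g(x) respectively. If V : ℝ → ℝ is convex, then λ ↦ ∬_{ℝ²} V(y − x) dμ_λ(y) dν_λ(x) is a convex function of λ on [0,1] (assuming the integrals are finite for all λ). -/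
open Set MeasureTheory

/-! Pushing the double integral back to `μ₀ ⊗ ν₀`, the interaction energy at time `λ` is
`∬ V((1-λ)(y-x) + λ(T_f y - T_g x)) dμ₀(y) dν₀(x)`. For fixed `(x, y)` the argument of `V` is
affine in `λ`, so the integrand is convex in `λ`, and integration preserves convexity. -/

theorem integral_integral_map_eq_integral_prod {α β γ δ E : Type*} [MeasurableSpace α]
    [MeasurableSpace β] [MeasurableSpace γ] [MeasurableSpace δ]
    [NormedAddCommGroup E] [NormedSpace ℝ E]
    {μ : Measure α} {ν : Measure γ} [SFinite μ] [SFinite ν] {S : α → β} {T : γ → δ}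
    (hS : Measurable S) (hT : Measurable T) {f : β → δ → E}
    (hf : StronglyMeasurable (Function.uncurry f))
    (hint : Integrable (fun p : α × γ => f (S p.1) (T p.2)) (μ.prod ν)) :
    ∫ x, ∫ y, f y x ∂(μ.map S) ∂(ν.map T) = ∫ p, f (S p.1) (T p.2) ∂(μ.prod ν) := by
  have hST : Measurable (Prod.map S T) := hS.prodMap hT
  have hint_map : Integrable (Function.uncurry f) ((μ.map S).prod (ν.map T)) := by
    rwa [Measure.map_prod_map μ ν hS hT,
      integrable_map_measure hf.aestronglyMeasurable hST.aemeasurable]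
  calc ∫ x, ∫ y, f y x ∂(μ.map S) ∂(ν.map T)
      = ∫ q, Function.uncurry f q ∂((μ.map S).prod (ν.map T)) :=
        (integral_prod_symm _ hint_map).symm
    _ = ∫ q, Function.uncurry f q ∂((μ.prod ν).map (Prod.map S T)) := by
        rw [Measure.map_prod_map μ ν hS hT]
    _ = ∫ p, f (S p.1) (T p.2) ∂(μ.prod ν) :=
        integral_map hST.aemeasurable hf.aestronglyMeasurable

theorem convexOn_integral_comp_interpolation {α : Type*} [MeasurableSpace α] {ρ : Measure α}
    {V : ℝ → ℝ} (hV : ConvexOn ℝ univ V) {s : Set ℝ} (hs : Convex ℝ s) {u w : α → ℝ}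
    (hint : ∀ lam ∈ s, Integrable (fun p => V ((1 - lam) * u p + lam * w p)) ρ) :
    ConvexOn ℝ s (fun lam => ∫ p, V ((1 - lam) * u p + lam * w p) ∂ρ) := by
  refine integral_convexOn_of_integrand_ae hs (Filter.Eventually.of_forall fun p => ?_) hint
  have := (hV.comp_affineMap (AffineMap.lineMap (u p) (w p))).subset (subset_univ s) hs
  simpa only [Function.comp_def, AffineMap.lineMap_apply_module, smul_eq_mul] using this

theorem stmt10_general (μ₀ ν₀ : Measure ℝ)
    [IsProbabilityMeasure μ₀] [IsProbabilityMeasure ν₀]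
    (f₀ g₀ f₁inv g₁inv V : ℝ → ℝ)
    (hV : ConvexOn ℝ univ V)
    (hTf_meas : Measurable fun x => f₁inv (f₀ x)) (hTg_meas : Measurable fun x => g₁inv (g₀ x))
    (hint : ∀ lam ∈ Icc (0:ℝ) 1,
      Integrable
        (fun p : ℝ × ℝ =>
          V ((1 - lam) * (p.1 - p.2) + lam * (f₁inv (f₀ p.1) - g₁inv (g₀ p.2))))
        (μ₀.prod ν₀)) :
    ConvexOn ℝ (Icc (0:ℝ) 1)
      (fun lam => ∫ x,
        (∫ y, V (y - x) ∂(μ₀.map (fun z => (1 - lam) * z + lam * f₁inv (f₀ z))))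
          ∂(ν₀.map (fun z => (1 - lam) * z + lam * g₁inv (g₀ z)))) := by
  have hV_cont : Continuous V := continuousOn_univ.mp (hV.continuousOn isOpen_univ)
  refine (convexOn_integral_comp_interpolation hV (convex_Icc 0 1) hint).congr
    fun lam hlam => ?_
  have hinterp : ∀ p : ℝ × ℝ,
      (1 - lam) * (p.1 - p.2) + lam * (f₁inv (f₀ p.1) - g₁inv (g₀ p.2)) =
        ((1 - lam) * p.1 + lam * f₁inv (f₀ p.1)) - ((1 - lam) * p.2 + lam * g₁inv (g₀ p.2)) :=
    fun p => by ring
  have hint_lam := hint lam hlam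
  simp only [hinterp] at hint_lam ⊢
  exact (integral_integral_map_eq_integral_prod
    (measurable_id.const_mul _ |>.add (hTf_meas.const_mul lam))
    (measurable_id.const_mul _ |>.add (hTg_meas.const_mul lam))
    (f := fun y x => V (y - x)) (hV_cont.comp continuous_sub).stronglyMeasurable hint_lam).symm

/-- Displacement convexity of the interaction term: with monotone transport
maps `T_f = f₁⁻¹∘f₀`, `T_g = g₁⁻¹∘g₀` and `μ_λ, ν_λ` the pushforwards of `μ₀, ν₀` by
`x ↦ (1−λ)x + λT(x)`, if `V` is convex then
`λ ↦ ∬ V(y − x) dμ_λ(y) dν_λ(x)` is convex on `[0,1]`. -/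
theorem stmt10 (μ₀ μ₁ ν₀ ν₁ : Measure ℝ)
    [IsProbabilityMeasure μ₀] [IsProbabilityMeasure μ₁]
    [IsProbabilityMeasure ν₀] [IsProbabilityMeasure ν₁]
    (f₀ f₁ g₀ g₁ f₁inv g₁inv V : ℝ → ℝ)
    (hf₀_cont : Continuous f₀) (hf₁_cont : Continuous f₁)
    (hg₀_cont : Continuous g₀) (hg₁_cont : Continuous g₁)
    (hf₀_mono : StrictMono f₀) (hf₁_mono : StrictMono f₁)
    (hg₀_mono : StrictMono g₀) (hg₁_mono : StrictMono g₁)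
    (hcdff₀ : ∀ x, (μ₀ (Iic x)).toReal = f₀ x) (hcdff₁ : ∀ x, (μ₁ (Iic x)).toReal = f₁ x)
    (hcdfg₀ : ∀ x, (ν₀ (Iic x)).toReal = g₀ x) (hcdfg₁ : ∀ x, (ν₁ (Iic x)).toReal = g₁ x)
    (hinvf_left : ∀ x, f₁inv (f₁ x) = x) (hinvf_right : ∀ u ∈ Ioo (0:ℝ) 1, f₁ (f₁inv u) = u)
    (hinvg_left : ∀ x, g₁inv (g₁ x) = x) (hinvg_right : ∀ u ∈ Ioo (0:ℝ) 1, g₁ (g₁inv u) = u)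
    (hV : ConvexOn ℝ univ V)
    (hTf_meas : Measurable fun x => f₁inv (f₀ x)) (hTg_meas : Measurable fun x => g₁inv (g₀ x))
    (hint : ∀ lam ∈ Icc (0:ℝ) 1,
      Integrable
        (fun p : ℝ × ℝ =>
          V ((1 - lam) * (p.1 - p.2) + lam * (f₁inv (f₀ p.1) - g₁inv (g₀ p.2))))
        (μ₀.prod ν₀)) :
    ConvexOn ℝ (Icc (0:ℝ) 1)
      (fun lam => ∫ x,
        (∫ y, V (y - x) ∂(μ₀.map (fun z => (1 - lam) * z + lam * f₁inv (f₀ z))))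
          ∂(ν₀.map (fun z => (1 - lam) * z + lam * g₁inv (g₀ z)))) :=
  stmt10_general μ₀ ν₀ f₀ g₀ f₁inv g₁inv V hV hTf_meas hTg_meas hint
end

section
/- (Strict displacement convexity of the interaction term) In the setting of the previous statement, suppose V is strictly convex on (−W, W) and convex on ℝ. If there exists s ∈ ℝ such that the sets A⁺ = supp(μ₀ restricted to {x : x − T_f(x) ≥ s}) and A⁻ = supp(μ₀ restricted to {x : x − T_f(x) < s}) are both nonempty, and there are x_g ∈ supp(ν₀), x⁺ ∈ A⁺, x⁻ ∈ A⁻ with |x_g − x⁺| < W and |x_g − x⁻| < W, then λ ↦ ∬_{ℝ²} V((1−λ)(y−x)+λ(T_f(y)−T_g(x))) dμ₀(y) dν₀(x) is strictly convex at λ = 0 (i.e., not affine on any interval [0,δ]). -/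
open Set MeasureTheory

/-- Midpoint convexity inequality. -/
lemma my_midle {V : ℝ → ℝ} (hV : ConvexOn ℝ univ V) (a b : ℝ) :
    2 * V ((a + b) / 2) ≤ V a + V b := by
  have h := hV.2 (mem_univ a) (mem_univ b) (by norm_num : (0:ℝ) ≤ 1/2)
      (by norm_num : (0:ℝ) ≤ 1/2) (by norm_num)
  simp only [smul_eq_mul] at h
  have e : (1/2 : ℝ) * a + 1/2 * b = (a + b) / 2 := by ring
  rw [e] at h
  linarith

/-- If a convex function satisfies the midpoint equality on `[a,b]`, it also does on
`[a, (a+b)/2]`. -/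
lemma my_halve {V : ℝ → ℝ} (hV : ConvexOn ℝ univ V) (a b : ℝ)
    (h : 2 * V ((a + b) / 2) = V a + V b) :
    2 * V ((a + (a + b) / 2) / 2) = V a + V ((a + b) / 2) := by
  set m := (a + b) / 2 with hm
  have hq := my_midle hV a m
  have hr := my_midle hV m b
  have hmm := my_midle hV ((a + m) / 2) ((m + b) / 2)
  have e : ((a + m) / 2 + (m + b) / 2) / 2 = m := by rw [hm]; ring
  rw [e] at hmm
  linarith

/-- Iterated halving of midpoint equalities. -/
lemma my_dyadic {V : ℝ → ℝ} (hV : ConvexOn ℝ univ V) (u d δ : ℝ)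
    (h : 2 * V (u + δ / 2 * d) = V u + V (u + δ * d)) :
    ∀ n : ℕ, 2 * V (u + δ / 2 ^ (n + 1) * d) = V u + V (u + δ / 2 ^ n * d) := by
  intro n
  induction n with
  | zero => simpa using h
  | succ k ih =>
      have hab : (u + (u + δ / 2 ^ k * d)) / 2 = u + δ / 2 ^ (k + 1) * d := by
        rw [pow_succ]; ring
      have := my_halve hV u (u + δ / 2 ^ k * d) (by rw [hab]; exact ih)
      rw [hab] at this
      have hab2 : (u + (u + δ / 2 ^ (k + 1) * d)) / 2 = u + δ / 2 ^ (k + 1 + 1) * d := by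
        rw [pow_succ]; ring
      rw [hab2] at this
      exact this

/-- Room lemma: one can enlarge `|c|` a bit staying below `W`. -/
lemma my_room {W : ENNReal} {c : ℝ} (h : ENNReal.ofReal |c| < W) :
    ∃ ε > (0:ℝ), ∀ r : ℝ, |r| ≤ |c| + 2 * ε → ENNReal.ofReal |r| < W := by
  rcases eq_or_ne W ⊤ with rfl | hW
  · exact ⟨1, one_pos, fun r _ => ENNReal.ofReal_lt_top⟩
  · have hc : |c| < W.toReal := (ENNReal.ofReal_lt_iff_lt_toReal (abs_nonneg c) hW).mp h
    refine ⟨(W.toReal - |c|) / 4, by linarith, fun r hr => ?_⟩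
    have hrw : |r| < W.toReal := by linarith
    have : ENNReal.ofReal |r| < ENNReal.ofReal W.toReal :=
      (ENNReal.ofReal_lt_ofReal_iff (lt_of_le_of_lt (abs_nonneg c) hc)).mpr hrw
    rwa [ENNReal.ofReal_toReal hW] at this

/-- Core deterministic contradiction. -/
lemma my_core (V : ℝ → ℝ) (W : ENNReal) (hV_conv : ConvexOn ℝ univ V)
    (hV_strict : StrictConvexOn ℝ {x : ℝ | ENNReal.ofReal |x| < W} V)
    (u d δ ε : ℝ) (hδ : 0 < δ) (hd : d ≠ 0) (hε : 0 < ε)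
    (hroom : ∀ r : ℝ, |r| ≤ |u| + 2 * ε → ENNReal.ofReal |r| < W)
    (hmid : 2 * V (u + δ / 2 * d) = V u + V (u + δ * d)) : False := by
  obtain ⟨n, hn⟩ := pow_unbounded_of_one_lt (δ * |d| / (2 * ε)) (one_lt_two (α := ℝ))
  have h2n : (0:ℝ) < 2 ^ n := by positivity
  have hsmall : δ / 2 ^ n * |d| ≤ 2 * ε := by
    rw [div_lt_iff₀ (by positivity)] at hn
    rw [div_mul_eq_mul_div, div_le_iff₀ h2n]
    nlinarith
  have hu_mem : u ∈ {x : ℝ | ENNReal.ofReal |x| < W} := hroom u (by linarith)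
  have hb_mem : u + δ / 2 ^ n * d ∈ {x : ℝ | ENNReal.ofReal |x| < W} := by
    apply hroom
    have : |u + δ / 2 ^ n * d| ≤ |u| + δ / 2 ^ n * |d| := by
      calc |u + δ / 2 ^ n * d| ≤ |u| + |δ / 2 ^ n * d| := abs_add_le _ _
      _ = |u| + δ / 2 ^ n * |d| := by
          rw [abs_mul, abs_of_pos (by positivity : (0:ℝ) < δ / 2 ^ n)]
    linarith
  have hne : u ≠ u + δ / 2 ^ n * d := by
    have hdn : δ / 2 ^ n * d ≠ 0 := mul_ne_zero (by positivity) hd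
    intro h; exact hdn (by linarith)
  have hstrict := hV_strict.2 hu_mem hb_mem hne
      (by norm_num : (0:ℝ) < 1/2) (by norm_num : (0:ℝ) < 1/2) (by norm_num)
  simp only [smul_eq_mul] at hstrict
  have e : (1/2:ℝ) * u + 1/2 * (u + δ / 2 ^ n * d) = u + δ / 2 ^ (n+1) * d := by
    rw [pow_succ]; ring
  rw [e] at hstrict
  have := my_dyadic hV_conv u d δ hmid n
  linarith

open Set MeasureTheory

/-- Strict displacement convexity of the interaction term: if `V` is convex,
strictly convex on `(−W,W)`, and there are `s ∈ ℝ`, a point `x_g` in the support of `ν₀`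
and points `x⁺, x⁻` in the supports of `μ₀` restricted to `{x − T_f(x) ≥ s}` and
`{x − T_f(x) < s}` respectively, with `|x_g − x⁺| < W` and `|x_g − x⁻| < W`, then
`λ ↦ ∬ V((1−λ)(y−x)+λ(T_f(y)−T_g(x))) dμ₀(y) dν₀(x)` is not affine on any `[0,δ]`. -/
theorem stmt11 (μ₀ ν₀ : Measure ℝ) [IsProbabilityMeasure μ₀] [IsProbabilityMeasure ν₀]
    (Tf Tg V : ℝ → ℝ) (W : ENNReal) (hW : 0 < W)
    (hTf : Measurable Tf) (hTg : Measurable Tg)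
    (hV_conv : ConvexOn ℝ univ V)
    (hV_strict : StrictConvexOn ℝ {x : ℝ | ENNReal.ofReal |x| < W} V)
    (hint : ∀ lam ∈ Icc (0:ℝ) 1,
      Integrable
        (fun p : ℝ × ℝ => V ((1 - lam) * (p.1 - p.2) + lam * (Tf p.1 - Tg p.2)))
        (μ₀.prod ν₀))
    (s xg xp xm : ℝ)
    (hxp : ∀ ε > (0:ℝ), 0 < μ₀ (Metric.ball xp ε ∩ {x | s ≤ x - Tf x}))
    (hxm : ∀ ε > (0:ℝ), 0 < μ₀ (Metric.ball xm ε ∩ {x | x - Tf x < s}))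
    (hxg : ∀ ε > (0:ℝ), 0 < ν₀ (Metric.ball xg ε))
    (hd₁ : ENNReal.ofReal |xg - xp| < W) (hd₂ : ENNReal.ofReal |xg - xm| < W) :
    ¬ ∃ δ > (0:ℝ), ∃ a b : ℝ, ∀ lam ∈ Icc (0:ℝ) δ,
      (∫ x, (∫ y, V ((1 - lam) * (y - x) + lam * (Tf y - Tg x)) ∂μ₀) ∂ν₀)
        = a + b * lam := by
  rintro ⟨δ, hδ, a, b, hfa⟩
  set δ' : ℝ := min δ 1 with hδ'def
  have hδ'0 : 0 < δ' := lt_min hδ one_pos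
  have hδ'1 : δ' ≤ 1 := min_le_right _ _
  have hδ'δ : δ' ≤ δ := min_le_left _ _
  -- continuity & measurability
  have hVcont : Continuous V := by
    rw [← continuousOn_univ]
    exact hV_conv.continuousOn isOpen_univ
  have hmeas : ∀ lam : ℝ,
      Measurable (fun p : ℝ × ℝ => V ((1 - lam) * (p.1 - p.2) + lam * (Tf p.1 - Tg p.2))) := by
    intro lam
    apply hVcont.measurable.comp
    exact (measurable_const.mul (measurable_fst.sub measurable_snd)).add
      (measurable_const.mul ((hTf.comp measurable_fst).sub (hTg.comp measurable_snd)))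
  set φ : ℝ → ℝ × ℝ → ℝ :=
    fun lam p => V ((1 - lam) * (p.1 - p.2) + lam * (Tf p.1 - Tg p.2)) with hφ
  set g : ℝ × ℝ → ℝ := fun p => φ 0 p + φ δ' p - 2 * φ (δ'/2) p with hg
  have hmem0 : (0:ℝ) ∈ Icc (0:ℝ) 1 := ⟨le_refl _, by norm_num⟩
  have hmemδ : δ' ∈ Icc (0:ℝ) 1 := ⟨hδ'0.le, hδ'1⟩
  have hmemm : δ'/2 ∈ Icc (0:ℝ) 1 := ⟨by positivity, by linarith⟩
  have hint0 : Integrable (φ 0) (μ₀.prod ν₀) := hint 0 hmem0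
  have hintδ : Integrable (φ δ') (μ₀.prod ν₀) := hint δ' hmemδ
  have hintm : Integrable (φ (δ'/2)) (μ₀.prod ν₀) := hint (δ'/2) hmemm
  have hg_int : Integrable g (μ₀.prod ν₀) := (hint0.add hintδ).sub (hintm.const_mul 2)
  have hg_nonneg : ∀ p, 0 ≤ g p := by
    intro p
    have harg : (1 - δ'/2) * (p.1 - p.2) + (δ'/2) * (Tf p.1 - Tg p.2)
        = (((1 - (0:ℝ)) * (p.1 - p.2) + 0 * (Tf p.1 - Tg p.2))
          + ((1 - δ') * (p.1 - p.2) + δ' * (Tf p.1 - Tg p.2))) / 2 := by ring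
    have hh := my_midle hV_conv ((1 - (0:ℝ)) * (p.1 - p.2) + 0 * (Tf p.1 - Tg p.2))
      ((1 - δ') * (p.1 - p.2) + δ' * (Tf p.1 - Tg p.2))
    simp only [hg, hφ]
    rw [harg]
    linarith
  -- integral of g is zero
  have hFint : ∀ lam, lam ∈ Icc (0:ℝ) 1 → lam ∈ Icc (0:ℝ) δ →
      ∫ p, φ lam p ∂(μ₀.prod ν₀) = a + b * lam := by
    intro lam h1 h2
    rw [integral_prod_symm _ (hint lam h1)]
    exact hfa lam h2
  have hg_zero : ∫ p, g p ∂(μ₀.prod ν₀) = 0 := by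
    have e1 : ∫ p, g p ∂(μ₀.prod ν₀)
        = (∫ p, φ 0 p ∂(μ₀.prod ν₀) + ∫ p, φ δ' p ∂(μ₀.prod ν₀))
          - 2 * ∫ p, φ (δ'/2) p ∂(μ₀.prod ν₀) := by
      have hadd : Integrable (fun p => φ 0 p + φ δ' p) (μ₀.prod ν₀) := hint0.add hintδ
      have hmul : Integrable (fun p => 2 * φ (δ'/2) p) (μ₀.prod ν₀) := hintm.const_mul 2
      rw [hg]
      rw [integral_sub hadd hmul, integral_add hint0 hintδ, integral_const_mul]
    rw [e1, hFint 0 hmem0 ⟨le_refl _, hδ.le⟩, hFint δ' hmemδ ⟨hδ'0.le, hδ'δ⟩,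
      hFint (δ'/2) hmemm ⟨by positivity, by linarith⟩]
    ring
  have hg_ae : ∀ᵐ p ∂(μ₀.prod ν₀), g p = 0 := by
    have := (integral_eq_zero_iff_of_nonneg hg_nonneg hg_int).mp hg_zero
    filter_upwards [this] with p hp using hp
  -- g measurable
  have hg_meas : Measurable g :=
    ((hmeas 0).add (hmeas δ')).sub ((hmeas (δ'/2)).const_mul 2)
  -- swap order of a.e.
  have hswap : ∀ᵐ q ∂(ν₀.prod μ₀), g (q.2, q.1) = 0 := by
    rw [← Measure.prod_swap]
    rw [ae_map_iff measurable_swap.aemeasurable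
      (by
        have : {q : ℝ × ℝ | g (q.2, q.1) = 0}
            = (fun q : ℝ × ℝ => g (q.2, q.1)) ⁻¹' {0} := rfl
        rw [this]
        exact (hg_meas.comp (measurable_snd.prodMk measurable_fst)) (measurableSet_singleton 0))]
    filter_upwards [hg_ae] with p hp using hp
  have hsections : ∀ᵐ x ∂ν₀, ∀ᵐ y ∂μ₀, g (y, x) = 0 := Measure.ae_ae_of_ae_prod hswap
  -- room
  obtain ⟨ε₁, hε₁, hroom₁⟩ := my_room hd₁
  obtain ⟨ε₂, hε₂, hroom₂⟩ := my_room hd₂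
  set ε : ℝ := min ε₁ ε₂ with hεdef
  have hε : 0 < ε := lt_min hε₁ hε₂
  -- pick x
  obtain ⟨x, hxB, hxae⟩ : ∃ x, x ∈ Metric.ball xg (ε/4) ∧ ∀ᵐ y ∂μ₀, g (y, x) = 0 := by
    by_contra hcon
    push_neg at hcon
    have hnull : ν₀ {x | ¬ ∀ᵐ y ∂μ₀, g (y, x) = 0} = 0 := by
      rw [← ae_iff]; exact hsections
    have hsub : Metric.ball xg (ε/4) ⊆ {x | ¬ ∀ᵐ y ∂μ₀, g (y, x) = 0} :=
      fun x hx => Filter.not_eventually.mpr (hcon x hx)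
    exact absurd (measure_mono_null hsub hnull) (hxg (ε/4) (by positivity)).ne'
  -- pick y⁺ and y⁻
  obtain ⟨yp, hypB, hyp0⟩ : ∃ y, y ∈ Metric.ball xp (ε/4) ∩ {z | s ≤ z - Tf z}
      ∧ g (y, x) = 0 := by
    by_contra hcon
    push_neg at hcon
    have hnull : μ₀ {y | ¬ g (y, x) = 0} = 0 := by rw [← ae_iff]; exact hxae
    have hsub : Metric.ball xp (ε/4) ∩ {z | s ≤ z - Tf z} ⊆ {y | ¬ g (y, x) = 0} :=
      fun y hy => hcon y hy
    exact absurd (measure_mono_null hsub hnull) (hxp (ε/4) (by positivity)).ne'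
  obtain ⟨ym, hymB, hym0⟩ : ∃ y, y ∈ Metric.ball xm (ε/4) ∩ {z | z - Tf z < s}
      ∧ g (y, x) = 0 := by
    by_contra hcon
    push_neg at hcon
    have hnull : μ₀ {y | ¬ g (y, x) = 0} = 0 := by rw [← ae_iff]; exact hxae
    have hsub : Metric.ball xm (ε/4) ∩ {z | z - Tf z < s} ⊆ {y | ¬ g (y, x) = 0} :=
      fun y hy => hcon y hy
    exact absurd (measure_mono_null hsub hnull) (hxm (ε/4) (by positivity)).ne'
  -- displacements
  set dp : ℝ := (Tf yp - Tg x) - (yp - x) with hdp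
  set dm : ℝ := (Tf ym - Tg x) - (ym - x) with hdm
  have hdpdm : dp < dm := by
    have h1 : s ≤ yp - Tf yp := hypB.2
    have h2 : ym - Tf ym < s := hymB.2
    rw [hdp, hdm]; nlinarith
  -- bounds on |y - x|
  have hxg' : |x - xg| < ε/4 := by
    have := hxB; rw [Metric.mem_ball, Real.dist_eq] at this; exact this
  have hup_bound : |yp - x| ≤ |xg - xp| + ε/2 := by
    have h1 : |yp - xp| < ε/4 := by
      have := hypB.1; rw [Metric.mem_ball, Real.dist_eq] at this; exact this
    calc |yp - x| = |(yp - xp) + (xp - xg) + (xg - x)| := by ring_nf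
      _ ≤ |yp - xp| + |xp - xg| + |xg - x| := by
          calc |(yp - xp) + (xp - xg) + (xg - x)|
              ≤ |(yp - xp) + (xp - xg)| + |xg - x| := abs_add_le _ _
            _ ≤ |yp - xp| + |xp - xg| + |xg - x| := by linarith [abs_add_le (yp - xp) (xp - xg)]
      _ ≤ |xg - xp| + ε/2 := by
          rw [abs_sub_comm xp xg, abs_sub_comm xg x]; linarith
  have hum_bound : |ym - x| ≤ |xg - xm| + ε/2 := by
    have h1 : |ym - xm| < ε/4 := by
      have := hymB.1; rw [Metric.mem_ball, Real.dist_eq] at this; exact this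
    calc |ym - x| = |(ym - xm) + (xm - xg) + (xg - x)| := by ring_nf
      _ ≤ |ym - xm| + |xm - xg| + |xg - x| := by
          calc |(ym - xm) + (xm - xg) + (xg - x)|
              ≤ |(ym - xm) + (xm - xg)| + |xg - x| := abs_add_le _ _
            _ ≤ |ym - xm| + |xm - xg| + |xg - x| := by linarith [abs_add_le (ym - xm) (xm - xg)]
      _ ≤ |xg - xm| + ε/2 := by
          rw [abs_sub_comm xm xg, abs_sub_comm xg x]; linarith
  -- midpoint equalities at the chosen points
  have hmidp : 2 * V ((yp - x) + δ'/2 * dp) = V (yp - x) + V ((yp - x) + δ' * dp) := by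
    simp only [hg, hφ] at hyp0
    have e0 : (1 - (0:ℝ)) * (yp - x) + 0 * (Tf yp - Tg x) = yp - x := by ring
    have e1 : (1 - δ') * (yp - x) + δ' * (Tf yp - Tg x) = (yp - x) + δ' * dp := by
      rw [hdp]; ring
    have e2 : (1 - δ'/2) * (yp - x) + δ'/2 * (Tf yp - Tg x) = (yp - x) + δ'/2 * dp := by
      rw [hdp]; ring
    rw [e0, e1, e2] at hyp0
    linarith
  have hmidm : 2 * V ((ym - x) + δ'/2 * dm) = V (ym - x) + V ((ym - x) + δ' * dm) := by
    simp only [hg, hφ] at hym0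
    have e0 : (1 - (0:ℝ)) * (ym - x) + 0 * (Tf ym - Tg x) = ym - x := by ring
    have e1 : (1 - δ') * (ym - x) + δ' * (Tf ym - Tg x) = (ym - x) + δ' * dm := by
      rw [hdm]; ring
    have e2 : (1 - δ'/2) * (ym - x) + δ'/2 * (Tf ym - Tg x) = (ym - x) + δ'/2 * dm := by
      rw [hdm]; ring
    rw [e0, e1, e2] at hym0
    linarith
  -- conclude
  rcases eq_or_ne dp 0 with hdp0 | hdp0
  · have hdm0 : dm ≠ 0 := by rw [hdp0] at hdpdm; exact (ne_of_gt hdpdm)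
    refine my_core V W hV_conv hV_strict (ym - x) dm δ' (ε/4) hδ'0 hdm0 (by positivity)
      (fun r hr => ?_) hmidm
    apply hroom₂
    have : ε ≤ ε₂ := min_le_right _ _
    linarith
  · refine my_core V W hV_conv hV_strict (yp - x) dp δ' (ε/4) hδ'0 hdp0 (by positivity)
      (fun r hr => ?_) hmidp
    apply hroom₁
    have : ε ≤ ε₁ := min_le_left _ _
    linarith
end

section
/- Let w be nonnegative, even, integrable, ∫w = 1, with Ω(x) = ∫_{−∞}^x w. Let f, g be cdf's of probability measures on ℝ. Then for any x₁ ∈ ℝ: ∫₀^∞ w(x) ∫_{(x₁, x₁+x]} (g(x₁) − g(y−x)) df(y) dx = ∬ 1{x₁ < y, z ≤ x₁, 0 ≤ y−z} Ω(−(y−z)) dg(z) df(y), i.e., the window-integral representation of the one-sided part of ξ_φ equals the kernel representation with Ω(−|·|). -/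
/-!
Both sides are the integral of `w x` over the region `{x > 0, x₁ < y, z ≤ x₁, y - z < x}` with
respect to `dx ⊗ μ(dy) ⊗ ν(dz)`. Integrating out `z` first gives `ν (Ioc (y - x) x₁)`, the cdf
difference on the left; integrating out `x` first gives `∫_{y - z}^∞ w = Ω (-(y - z))` by evenness
of `w`, the kernel on the right.
-/

open Set MeasureTheory

theorem measureReal_Ioc_eq_sub_Iic {α : Type*} [TopologicalSpace α] [MeasurableSpace α]
    [OpensMeasurableSpace α] [LinearOrder α] [ClosedIicTopology α]
    (ν : Measure α) [IsFiniteMeasure ν] {a b : α} (h : a ≤ b) :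
    ν.real (Ioc a b) = ν.real (Iic b) - ν.real (Iic a) := by
  rw [← Iic_sdiff_Iic, measureReal_sdiff (Iic_subset_Iic.2 h) measurableSet_Iic]

theorem measureReal_prod_eq_integral {α β : Type*} [MeasurableSpace α] [MeasurableSpace β]
    (μ : Measure α) (ν : Measure β) [IsFiniteMeasure ν] {s : Set (α × β)} (hs : MeasurableSet s) :
    (μ.prod ν).real s = ∫ x, ν.real (Prod.mk x ⁻¹' s) ∂μ := by
  rw [measureReal_def, Measure.prod_apply hs, ← integral_toReal
    (measurable_measure_prodMk_left hs).aemeasurable (ae_of_all _ fun _ => measure_lt_top _ _)]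
  rfl

theorem setIntegral_Ioc_sub_measureReal_Iic_eq_measureReal_prod (μ ν : Measure ℝ)
    [IsFiniteMeasure ν] (a x : ℝ) :
    ∫ y in Ioc a (a + x), (ν.real (Iic a) - ν.real (Iic (y - x))) ∂μ =
      (μ.prod ν).real {p | a < p.1 ∧ p.2 ≤ a ∧ p.1 - p.2 < x} := by
  have hs : MeasurableSet {p : ℝ × ℝ | a < p.1 ∧ p.2 ≤ a ∧ p.1 - p.2 < x} :=
    (measurableSet_lt measurable_const measurable_fst).inter
      ((measurableSet_le measurable_snd measurable_const).inter
        (measurableSet_lt (measurable_fst.sub measurable_snd) measurable_const))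
  have hslice : ∀ y, ν.real (Prod.mk y ⁻¹' {p : ℝ × ℝ | a < p.1 ∧ p.2 ≤ a ∧ p.1 - p.2 < x}) =
      (Ioc a (a + x)).indicator (fun y => ν.real (Iic a) - ν.real (Iic (y - x))) y := by
    intro y
    by_cases hy : y ∈ Ioc a (a + x)
    · rw [indicator_of_mem hy, ← measureReal_Ioc_eq_sub_Iic ν (by linarith [hy.2])]
      congr 1
      ext z
      simp only [mem_preimage, mem_ofPred_eq, mem_Ioc]
      constructor
      · rintro ⟨-, hz, hxz⟩; exact ⟨by linarith, hz⟩
      · rintro ⟨hxz, hz⟩; exact ⟨hy.1, hz, by linarith⟩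
    · rw [indicator_of_notMem hy]
      convert measureReal_empty (μ := ν)
      refine eq_empty_of_forall_notMem fun z ⟨hay, _, hxz⟩ => hy ⟨hay, by linarith⟩
  simp_rw [measureReal_prod_eq_integral μ ν hs, hslice, integral_indicator measurableSet_Ioc]

theorem integral_mul_measureReal_lt_eq_integral_setIntegral {α : Type*} [MeasurableSpace α]
    (ρ : Measure α) [IsFiniteMeasure ρ] {f : α → ℝ} (hf : Measurable f) {w : ℝ → ℝ}
    (hw : Integrable w) {s : Set ℝ} :
    ∫ x in s, w x * ρ.real {a | f a < x} = ∫ a, (∫ x in s ∩ Ioi (f a), w x) ∂ρ := by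
  have hlt : MeasurableSet {q : ℝ × α | f q.2 < q.1} :=
    measurableSet_lt (hf.comp measurable_snd) measurable_fst
  have hint : Integrable ({q : ℝ × α | f q.2 < q.1}.indicator fun q => w q.1)
      ((volume.restrict s).prod ρ) :=
    (hw.integrableOn.comp_fst ρ).indicator hlt
  calc ∫ x in s, w x * ρ.real {a | f a < x}
      = ∫ x in s, ∫ a, {q : ℝ × α | f q.2 < q.1}.indicator (fun q => w q.1) (x, a) ∂ρ := by
        refine integral_congr_ae (ae_of_all _ fun x => ?_)
        dsimp only
        rw [mul_comm, ← smul_eq_mul,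
          ← integral_indicator_const _ (measurableSet_lt hf measurable_const)]
        rfl
    _ = ∫ a, (∫ x in s, {q : ℝ × α | f q.2 < q.1}.indicator (fun q => w q.1) (x, a)) ∂ρ :=
        integral_integral_swap hint
    _ = ∫ a, (∫ x in s ∩ Ioi (f a), w x) ∂ρ := by
        refine integral_congr_ae (ae_of_all _ fun a => ?_)
        dsimp only
        rw [inter_comm, ← Measure.restrict_restrict measurableSet_Ioi,
          ← integral_indicator measurableSet_Ioi]
        rfl

theorem setIntegral_Iic_neg_eq_setIntegral_Ioi {w : ℝ → ℝ} (hw_even : ∀ x, w (-x) = w x)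
    (c : ℝ) :
    ∫ t in Iic (-c), w t = ∫ t in Ioi c, w t := by
  simp_rw [← integral_comp_neg_Ioi, hw_even]

theorem stmt13_general (μ ν : Measure ℝ) [IsProbabilityMeasure μ] [IsProbabilityMeasure ν]
    (w : ℝ → ℝ) (hw_even : ∀ x, w (-x) = w x)
    (hw_int : Integrable w)
    (x₁ : ℝ) :
    (∫ x in Ioi (0:ℝ), w x *
        ∫ y in Ioc x₁ (x₁ + x), ((ν (Iic x₁)).toReal - (ν (Iic (y - x))).toReal) ∂μ) =
      ∫ p : ℝ × ℝ,
        (if x₁ < p.1 ∧ p.2 ≤ x₁ ∧ 0 ≤ p.1 - p.2 then ∫ t in Iic (-(p.1 - p.2)), w t else 0)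
        ∂(μ.prod ν) := by
  set A : Set (ℝ × ℝ) := {p | x₁ < p.1 ∧ p.2 ≤ x₁}
  have hA : MeasurableSet A :=
    (measurableSet_lt measurable_const measurable_fst).inter
      (measurableSet_le measurable_snd measurable_const)
  have hgap : ∀ p ∈ A, 0 < p.1 - p.2 := fun p hp => by linarith [hp.1, hp.2]
  calc (∫ x in Ioi (0:ℝ), w x *
        ∫ y in Ioc x₁ (x₁ + x), ((ν (Iic x₁)).toReal - (ν (Iic (y - x))).toReal) ∂μ)
      = ∫ x in Ioi (0:ℝ), w x * ((μ.prod ν).restrict A).real {p | p.1 - p.2 < x} := by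
        refine integral_congr_ae (ae_of_all _ fun x => ?_)
        dsimp only
        have hlt : MeasurableSet {p : ℝ × ℝ | p.1 - p.2 < x} :=
          measurableSet_lt (measurable_fst.sub measurable_snd) measurable_const
        rw [measureReal_restrict_apply hlt]
        refine congrArg (w x * ·)
          ((setIntegral_Ioc_sub_measureReal_Iic_eq_measureReal_prod μ ν x₁ x).trans ?_)
        congr 1
        ext p
        simp only [A, mem_inter_iff, mem_ofPred_eq]
        tauto
    _ = ∫ p, (∫ x in Ioi 0 ∩ Ioi (p.1 - p.2), w x) ∂((μ.prod ν).restrict A) :=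
        integral_mul_measureReal_lt_eq_integral_setIntegral _
          (measurable_fst.sub measurable_snd) hw_int
    _ = ∫ p in A, (∫ t in Iic (-(p.1 - p.2)), w t) ∂(μ.prod ν) := by
        refine setIntegral_congr_fun hA fun p hp => ?_
        rw [Ioi_inter_Ioi, sup_eq_right.2 (hgap p hp).le,
          setIntegral_Iic_neg_eq_setIntegral_Ioi hw_even]
    _ = _ := by
        rw [← integral_indicator hA]
        have hcond : ∀ p : ℝ × ℝ, (x₁ < p.1 ∧ p.2 ≤ x₁ ∧ 0 ≤ p.1 - p.2) ↔ p ∈ A :=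
          fun p => ⟨fun h => ⟨h.1, h.2.1⟩, fun h => ⟨h.1, h.2, (hgap p h).le⟩⟩
        simp only [indicator_apply, hcond]

/-- The window-integral representation of the one-sided part of `ξ_φ`
equals the kernel representation:
`∫₀^∞ w(x) ∫_{(x₁,x₁+x]} (g(x₁) − g(y−x)) df(y) dx
  = ∬ 1{x₁ < y, z ≤ x₁, 0 ≤ y−z} Ω(−(y−z)) dg(z) df(y)`,
where `f, g` are the cdf's of `μ, ν` and `Ω(x) = ∫_{−∞}^x w`. -/
theorem stmt13 (μ ν : Measure ℝ) [IsProbabilityMeasure μ] [IsProbabilityMeasure ν]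
    (w : ℝ → ℝ) (hw_nonneg : ∀ x, 0 ≤ w x) (hw_even : ∀ x, w (-x) = w x)
    (hw_int : Integrable w) (hw_norm : (∫ x, w x) = 1)
    (x₁ : ℝ) :
    (∫ x in Ioi (0:ℝ), w x *
        ∫ y in Ioc x₁ (x₁ + x), ((ν (Iic x₁)).toReal - (ν (Iic (y - x))).toReal) ∂μ) =
      ∫ p : ℝ × ℝ,
        (if x₁ < p.1 ∧ p.2 ≤ x₁ ∧ 0 ≤ p.1 - p.2 then ∫ t in Iic (-(p.1 - p.2)), w t else 0)
        ∂(μ.prod ν) :=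
  stmt13_general μ ν w hw_even hw_int x₁
end

section
/- Let h_g : [0,1] → [0,1] be a continuous strictly increasing bijection with h_g(0)=0, h_g(1)=1, and let g_λ, g₀ : ℝ → [0,1] be continuous strictly increasing cdf's such that g₀ − g_λ is Lebesgue-integrable on ℝ. Then ∫_ℝ (∫₀^{g_λ(x)} h_g⁻¹(u)du − ∫₀^{g₀(x)} h_g⁻¹(u)du) dx = ∫₀¹ h_g⁻¹(u)(g₀⁻¹(u) − g_λ⁻¹(u)) du. -/
/-!
Write `φ` for `h_g⁻¹` extended by zero outside `(0,1)`. Since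
`∫_{g₀ x}^{g_λ x} φ = ∫ φ u (1[u ≤ g_λ x] - 1[u ≤ g₀ x]) du`, the left side is the integral of a
kernel on `ℝ × ℝ` whose `x`-sections have `L¹`-norm at most `|g_λ x - g₀ x|`, so it is integrable
and Fubini applies. For fixed `u ∈ (0,1)`, `u ≤ g x ↔ g⁻¹ u ≤ x`, so the `u`-section is
`φ u (1[x ≥ g_λ⁻¹ u] - 1[x ≥ g₀⁻¹ u])`, whose integral is `φ u (g₀⁻¹ u - g_λ⁻¹ u)`.
-/

open Set MeasureTheory intervalIntegral

section IndicatorDifference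

variable {α M : Type*} [LinearOrder α] [AddCommGroup M]

theorem indicator_Iic_sub_indicator_Iic (a b : α) (φ : α → M) (u : α) :
    (Iic a).indicator φ u - (Iic b).indicator φ u =
      (Ioc b a).indicator φ u - (Ioc a b).indicator φ u := by
  by_cases ha : u ≤ a <;> by_cases hb : u ≤ b <;> simp [indicator_apply, ha, hb]

theorem indicator_Ioi_sub_indicator_Ioi (c d : α) (φ : α → M) (x : α) :
    (Ioi c).indicator φ x - (Ioi d).indicator φ x =
      (Iic d).indicator φ x - (Iic c).indicator φ x := by
  rw [← compl_Iic, ← compl_Iic, indicator_compl, indicator_compl]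
  simp only [Pi.sub_apply]
  abel

end IndicatorDifference

theorem norm_indicator_Iic_sub_indicator_Iic_le {E : Type*} [NormedAddCommGroup E] {φ : ℝ → E}
    {C : ℝ} (hC : ∀ u, ‖φ u‖ ≤ C) (a b u : ℝ) :
    ‖(Iic a).indicator φ u - (Iic b).indicator φ u‖ ≤ (uIoc a b).indicator (fun _ => C) u := by
  rw [indicator_Iic_sub_indicator_Iic]
  rcases le_total a b with hab | hab
  · rw [Ioc_eq_empty_of_le hab, uIoc_of_le hab, indicator_empty, zero_sub, norm_neg]
    exact (norm_indicator_eq_indicator_norm _ _).trans_le (indicator_le_indicator (hC u))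
  · rw [Ioc_eq_empty_of_le hab, uIoc_of_ge hab, indicator_empty, sub_zero]
    exact (norm_indicator_eq_indicator_norm _ _).trans_le (indicator_le_indicator (hC u))

section Integrals

variable {μ : Measure ℝ} {φ : ℝ → ℝ} {C : ℝ}

theorem integral_indicator_Iic_sub_indicator_Iic {a b : ℝ} (h : IntervalIntegrable φ μ b a) :
    ∫ u, (Iic a).indicator φ u - (Iic b).indicator φ u ∂μ = ∫ u in b..a, φ u ∂μ := by
  simp_rw [indicator_Iic_sub_indicator_Iic]
  rw [integral_sub (h.1.integrable_indicator measurableSet_Ioc)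
      (h.2.integrable_indicator measurableSet_Ioc),
    MeasureTheory.integral_indicator measurableSet_Ioc,
    MeasureTheory.integral_indicator measurableSet_Ioc]
  rfl

theorem integral_indicator_Ici_sub_indicator_Ici [NullSingletonClass μ] {c d : ℝ}
    (h : IntervalIntegrable φ μ c d) :
    ∫ x, (Ici c).indicator φ x - (Ici d).indicator φ x ∂μ = ∫ x in c..d, φ x ∂μ := by
  rw [← integral_indicator_Iic_sub_indicator_Iic h]
  refine integral_congr_ae ?_
  filter_upwards [indicator_ae_eq_of_ae_eq_set (f := φ) (Ioi_ae_eq_Ici (a := c)),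
    indicator_ae_eq_of_ae_eq_set (f := φ) (Ioi_ae_eq_Ici (a := d))] with x hc hd
  rw [← hc, ← hd, indicator_Ioi_sub_indicator_Ioi]

theorem integrable_indicator_Iic_sub_indicator_Iic (hφ : AEStronglyMeasurable φ)
    (hC : ∀ u, ‖φ u‖ ≤ C) (a b : ℝ) :
    Integrable (fun u => (Iic a).indicator φ u - (Iic b).indicator φ u) :=
  ((integrableOn_const (by simp [Real.volume_uIoc])).integrable_indicator measurableSet_uIoc).mono'
    ((hφ.indicator measurableSet_Iic).sub (hφ.indicator measurableSet_Iic))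
    (ae_of_all _ (norm_indicator_Iic_sub_indicator_Iic_le hC a b))

theorem integral_norm_indicator_Iic_sub_indicator_Iic_le (hC : ∀ u, ‖φ u‖ ≤ C) (a b : ℝ) :
    ∫ u, ‖(Iic a).indicator φ u - (Iic b).indicator φ u‖ ≤ C * |a - b| := by
  have hbound : Integrable ((uIoc a b).indicator fun _ => C) :=
    (integrableOn_const (by simp [Real.volume_uIoc])).integrable_indicator measurableSet_uIoc
  calc ∫ u, ‖(Iic a).indicator φ u - (Iic b).indicator φ u‖
      ≤ ∫ u, (uIoc a b).indicator (fun _ => C) u :=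
        integral_mono_of_nonneg (ae_of_all _ fun _ => norm_nonneg _) hbound
          (ae_of_all _ (norm_indicator_Iic_sub_indicator_Iic_le hC a b))
    _ = C * |a - b| := by
        rw [integral_indicator_const C measurableSet_uIoc, measureReal_def, Real.volume_uIoc,
          ENNReal.toReal_ofReal (abs_nonneg _), smul_eq_mul, mul_comm, abs_sub_comm]

theorem integrable_prod_indicator_Iic_sub_indicator_Iic (hφ : AEStronglyMeasurable φ)
    (hC : ∀ u, ‖φ u‖ ≤ C) {f g : ℝ → ℝ} (hf : Measurable f) (hg : Measurable g)
    (hfg : Integrable fun x => f x - g x) :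
    Integrable (fun p : ℝ × ℝ => (Iic (f p.1)).indicator φ p.2 - (Iic (g p.1)).indicator φ p.2)
      (volume.prod volume) := by
  have hset : ∀ {h : ℝ → ℝ}, Measurable h → MeasurableSet {p : ℝ × ℝ | p.2 ≤ h p.1} :=
    fun hh => measurableSet_le measurable_snd (hh.comp measurable_fst)
  have hmeas : AEStronglyMeasurable (fun p : ℝ × ℝ =>
      (Iic (f p.1)).indicator φ p.2 - (Iic (g p.1)).indicator φ p.2) (volume.prod volume) :=
    (hφ.comp_snd.indicator (hset hf)).sub (hφ.comp_snd.indicator (hset hg))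
  refine (integrable_prod_iff hmeas).2
    ⟨ae_of_all _ fun x => integrable_indicator_Iic_sub_indicator_Iic hφ hC (f x) (g x), ?_⟩
  refine (hfg.abs.const_mul C).mono' hmeas.norm.integral_prod_right' (ae_of_all _ fun x => ?_)
  rw [Real.norm_of_nonneg (integral_nonneg fun _ => norm_nonneg _)]
  exact integral_norm_indicator_Iic_sub_indicator_Iic_le hC (f x) (g x)

theorem integral_intervalIntegral_eq_integral_mul_sub
    (hφ : AEStronglyMeasurable φ) (hC : ∀ u, ‖φ u‖ ≤ C) {f g finv ginv : ℝ → ℝ}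
    (hf : Measurable f) (hg : Measurable g) (hfg : Integrable fun x => f x - g x)
    (hfinv : ∀ u ∈ Function.support φ, ∀ x, u ≤ f x ↔ finv u ≤ x)
    (hginv : ∀ u ∈ Function.support φ, ∀ x, u ≤ g x ↔ ginv u ≤ x) :
    ∫ x, ∫ u in g x..f x, φ u = ∫ u, φ u * (ginv u - finv u) := by
  have hφint (a b : ℝ) : IntervalIntegrable φ volume a b :=
    IntegrableOn.intervalIntegrable <|
      Measure.integrableOn_of_bounded isCompact_uIcc.measure_lt_top.ne hφ (ae_of_all _ hC)
  calc ∫ x, ∫ u in g x..f x, φ u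
      = ∫ x, ∫ u, (Iic (f x)).indicator φ u - (Iic (g x)).indicator φ u :=
        integral_congr_ae <| ae_of_all _ fun x =>
          (integral_indicator_Iic_sub_indicator_Iic (hφint _ _)).symm
    _ = ∫ u, ∫ x, (Iic (f x)).indicator φ u - (Iic (g x)).indicator φ u :=
        integral_integral_swap (integrable_prod_indicator_Iic_sub_indicator_Iic hφ hC hf hg hfg)
    _ = ∫ u, φ u * (ginv u - finv u) := integral_congr_ae <| ae_of_all _ fun u => ?_
  by_cases hu : u ∈ Function.support φ
  · have hlevel (x : ℝ) : (Iic (f x)).indicator φ u - (Iic (g x)).indicator φ u =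
        (Ici (finv u)).indicator (fun _ => φ u) x - (Ici (ginv u)).indicator (fun _ => φ u) x := by
      simp only [indicator_apply, mem_Iic, mem_Ici, hfinv u hu x, hginv u hu x]
    simp_rw [hlevel]
    rw [integral_indicator_Ici_sub_indicator_Ici intervalIntegrable_const,
      intervalIntegral.integral_const, smul_eq_mul, mul_comm]
  · simp [indicator_apply, Function.notMem_support.1 hu]

end Integrals

theorem StrictMonoOn.monotoneOn_of_rightInvOn {α β : Type*} [LinearOrder α] [Preorder β]
    {f : α → β} {g : β → α} {s : Set α} {t : Set β} (hf : StrictMonoOn f s) (hg : MapsTo g t s)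
    (hfg : RightInvOn g f t) : MonotoneOn g t := fun a ha b hb hab =>
  (hf.le_iff_le (hg ha) (hg hb)).1 <| by rwa [hfg ha, hfg hb]

theorem intervalIntegral_sub_intervalIntegral_eq_indicator {h : ℝ → ℝ}
    (hint : IntegrableOn h (Icc 0 1)) {c d : ℝ} (hc : c ∈ Ioo 0 1) (hd : d ∈ Ioo 0 1) :
    (∫ u in 0..c, h u) - ∫ u in 0..d, h u = ∫ u in d..c, (Ioo 0 1).indicator h u := by
  have hint₀ {c : ℝ} (hc : c ∈ Ioo 0 1) : IntervalIntegrable h volume 0 c :=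
    (hint.mono_set (uIcc_subset_Icc (left_mem_Icc.2 zero_le_one) (Ioo_subset_Icc_self hc))
      ).intervalIntegrable
  rw [integral_interval_sub_left (hint₀ hc) (hint₀ hd)]
  exact integral_congr fun u hu =>
    (indicator_of_mem (ordConnected_Ioo.uIcc_subset hd hc hu) _).symm

theorem stmt16_general (hg hginv g₀ glam g₀inv glaminv : ℝ → ℝ)
    (hg_mono : StrictMonoOn hg (Icc 0 1))
    (hginv_right : ∀ u ∈ Icc (0:ℝ) 1, hg (hginv u) = u)
    (hginv_range : ∀ u ∈ Icc (0:ℝ) 1, hginv u ∈ Icc (0:ℝ) 1)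
    (hg₀_mono : StrictMono g₀) (hglam_mono : StrictMono glam)
    (hg₀_range : Set.range g₀ = Ioo (0:ℝ) 1) (hglam_range : Set.range glam = Ioo (0:ℝ) 1)
    (hinv₀_right : ∀ u ∈ Ioo (0:ℝ) 1, g₀ (g₀inv u) = u)
    (hinvl_right : ∀ u ∈ Ioo (0:ℝ) 1, glam (glaminv u) = u)
    (hdiff_int : Integrable (fun x => g₀ x - glam x)) :
    (∫ x, ((∫ u in (0:ℝ)..(glam x), hginv u) - ∫ u in (0:ℝ)..(g₀ x), hginv u)) =
      ∫ u in (0:ℝ)..1, hginv u * (g₀inv u - glaminv u) := by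
  have hint : IntegrableOn hginv (Icc 0 1) :=
    (hg_mono.monotoneOn_of_rightInvOn hginv_range hginv_right).integrableOn_isCompact isCompact_Icc
  set φ := (Ioo (0:ℝ) 1).indicator hginv with hφ_def
  have hφ_le (u : ℝ) : ‖φ u‖ ≤ 1 := by
    by_cases hu : u ∈ Ioo (0:ℝ) 1
    · obtain ⟨h0, h1⟩ := hginv_range u (Ioo_subset_Icc_self hu)
      rwa [hφ_def, indicator_of_mem hu, Real.norm_of_nonneg h0]
    · simp [hφ_def, indicator_of_notMem hu]
  have hinv {f finv : ℝ → ℝ} (hf : StrictMono f) (hright : ∀ u ∈ Ioo (0:ℝ) 1, f (finv u) = u)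
      (u : ℝ) (hu : u ∈ Function.support φ) (x : ℝ) : u ≤ f x ↔ finv u ≤ x := by
    rw [← hf.le_iff_le (a := finv u), hright u (support_indicator_subset hu)]
  have hφ_meas : AEStronglyMeasurable φ :=
    (hint.mono_set Ioo_subset_Icc_self |>.integrable_indicator measurableSet_Ioo).aestronglyMeasurable
  have hswap := integral_intervalIntegral_eq_integral_mul_sub hφ_meas hφ_le
    hglam_mono.monotone.measurable hg₀_mono.monotone.measurable
    (by simpa only [Pi.neg_def, neg_sub] using hdiff_int.neg)
    (hinv hglam_mono hinvl_right) (hinv hg₀_mono hinv₀_right)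
  simp_rw [intervalIntegral_sub_intervalIntegral_eq_indicator hint
    (hglam_range ▸ mem_range_self _) (hg₀_range ▸ mem_range_self _)]
  rw [hswap, integral_of_le zero_le_one, integral_Ioc_eq_integral_Ioo,
    ← MeasureTheory.integral_indicator measurableSet_Ioo]
  simp_rw [hφ_def, indicator_mul_left]

/-- For continuous strictly increasing cdf's `g₀, g_λ` with integrable
difference and `h_g⁻¹` the inverse of a continuous strictly increasing bijection of `[0,1]`,
`∫_ℝ (∫₀^{g_λ(x)} h_g⁻¹ − ∫₀^{g₀(x)} h_g⁻¹) dx = ∫₀¹ h_g⁻¹(u)(g₀⁻¹(u) − g_λ⁻¹(u)) du`. -/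
theorem stmt16 (hg hginv g₀ glam g₀inv glaminv : ℝ → ℝ)
    (hg_cont : ContinuousOn hg (Icc 0 1)) (hg_mono : StrictMonoOn hg (Icc 0 1))
    (hg_maps : MapsTo hg (Icc 0 1) (Icc 0 1)) (hg_surj : SurjOn hg (Icc 0 1) (Icc 0 1))
    (hg0 : hg 0 = 0) (hg1 : hg 1 = 1)
    (hginv_left : ∀ u ∈ Icc (0:ℝ) 1, hginv (hg u) = u)
    (hginv_right : ∀ u ∈ Icc (0:ℝ) 1, hg (hginv u) = u)
    (hginv_range : ∀ u ∈ Icc (0:ℝ) 1, hginv u ∈ Icc (0:ℝ) 1)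
    (hg₀_cont : Continuous g₀) (hglam_cont : Continuous glam)
    (hg₀_mono : StrictMono g₀) (hglam_mono : StrictMono glam)
    (hg₀_range : Set.range g₀ = Ioo (0:ℝ) 1) (hglam_range : Set.range glam = Ioo (0:ℝ) 1)
    (hinv₀_left : ∀ x, g₀inv (g₀ x) = x) (hinv₀_right : ∀ u ∈ Ioo (0:ℝ) 1, g₀ (g₀inv u) = u)
    (hinvl_left : ∀ x, glaminv (glam x) = x)
    (hinvl_right : ∀ u ∈ Ioo (0:ℝ) 1, glam (glaminv u) = u)
    (hdiff_int : Integrable (fun x => g₀ x - glam x)) :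
    (∫ x, ((∫ u in (0:ℝ)..(glam x), hginv u) - ∫ u in (0:ℝ)..(g₀ x), hginv u)) =
      ∫ u in (0:ℝ)..1, hginv u * (g₀inv u - glaminv u) :=
  stmt16_general hg hginv g₀ glam g₀inv glaminv hg_mono hginv_right hginv_range hg₀_mono hglam_mono
    hg₀_range hglam_range hinv₀_right hinvl_right hdiff_int
end
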